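/- arXiv:2309.12715 — 4 statements merged into one kernel-verified Lean document; each statement's English description precedes it below -/
import Mathlib

section
/- Suppose an effect certificate for transaction Tx on object key k exists, i.e., a set E of at least 2f+1 validators signed effects for Tx, and suppose an unlock certificate with empty Cert for k exists, i.e., a set U of at least 2f+1 validators each voted 'no certificate seen' for k. If honest validators vote 'no certificate seen' only when they have not executed Tx, and honest validators in E have executed Tx, then with |V| = 3f+1 and at most f Byzantine validators, this is contradictory: no such pair of certificates can both exist. -/
/-- An effect certificate (set `E` of `≥ 2f+1` validators who signed effects, hence whose
honest members executed `Tx`) cannot coexist with an empty-`Cert` unlock certificate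
(set `U` of `≥ 2f+1` validators whose honest members voted "no certificate seen", hence
have not executed `Tx`), given `|V| = 3f+1` and at most `f` Byzantine validators. -/
theorem no_effectCert_and_emptyUnlockCert {α : Type*} [DecidableEq α]
    (f : ℕ) (V B E U : Finset α)
    (executed : α → Prop)
    (hV : V.card = 3 * f + 1)
    (hB : B ⊆ V) (hBf : B.card ≤ f)
    (hE : E ⊆ V) (hEc : 2 * f + 1 ≤ E.card)
    (hU : U ⊆ V) (hUc : 2 * f + 1 ≤ U.card)
    (hExec : ∀ v ∈ E, v ∉ B → executed v)
    (hNoExec : ∀ v ∈ U, v ∉ B → ¬ executed v) :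
    False := by
  have hEU : f + 1 ≤ (E ∩ U).card := by
    have h1 : E.card + U.card ≤ (E ∪ U).card + (E ∩ U).card := by
      rw [Finset.card_union_add_card_inter]
    have h2 : (E ∪ U).card ≤ V.card := Finset.card_le_card (Finset.union_subset hE hU)
    omega
  have hlt : B.card < (E ∩ U).card := by omega
  have : ¬ (E ∩ U ⊆ B) := fun h => absurd (Finset.card_le_card h) (not_le.mpr hlt)
  obtain ⟨v, hvEU, hvB⟩ := Finset.not_subset.mp this
  have hvE := Finset.mem_inter.mp hvEU
  exact hNoExec v hvE.2 hvB (hExec v hvE.1 hvB)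
end

section
/- In an epoch-change protocol where each honest validator sends end-of-epoch only after all certificates it executed are sequenced into checkpoints, if the epoch completes (2f+1 end-of-epoch messages sequenced) then every transaction finalized on the fast path (having an effect certificate signed by ≥ 2f+1 validators) appears in some checkpoint. -/
/-- Epoch-change safety: if transaction `T` is finalized on the fast path (a set `S` of
`≥ 2f+1` validators executed it) and the epoch completes (a set `E` of `≥ 2f+1`
validators' end-of-epoch messages were sequenced), where an honest validator sends
end-of-epoch only after all transactions it executed are checkpointed, then `T` appears
in some checkpoint. -/
theorem finalized_tx_checkpointed {α Tx : Type*} [DecidableEq α]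
    (f : ℕ) (V B S E : Finset α) (T : Tx)
    (executedBy : α → Tx → Prop) (checkpointed : Tx → Prop)
    (hV : V.card = 3 * f + 1)
    (hB : B ⊆ V) (hBf : B.card ≤ f)
    (hS : S ⊆ V) (hSc : 2 * f + 1 ≤ S.card)
    (hE : E ⊆ V) (hEc : 2 * f + 1 ≤ E.card)
    (hExec : ∀ v ∈ S, executedBy v T)
    (hEoE : ∀ v ∈ E, v ∉ B → ∀ T' : Tx, executedBy v T' → checkpointed T') :
    checkpointed T := by
  have hSE : f + 1 ≤ (S ∩ E).card := by
    have hu : (S ∪ E).card ≤ 3 * f + 1 := hV ▸ Finset.card_le_card (Finset.union_subset hS hE)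
    have := Finset.card_inter_add_card_union S E
    omega
  have : ¬ (S ∩ E ⊆ B) := fun h => by
    have := Finset.card_le_card h; omega
  obtain ⟨v, hv, hvB⟩ := Finset.not_subset.mp this
  have hvS := (Finset.mem_inter.mp hv).1
  have hvE := (Finset.mem_inter.mp hv).2
  exact hEoE v hvE hvB T (hExec v hvS)
end

section
/- Suppose a transaction Tx over owned objects has an effect certificate, and an unlock certificate UC for one of Tx's object keys is later sequenced. If at least one honest validator's unlock vote in UC carries the certificate Cert of Tx (i.e., UC.Cert = Cert), then processing UC executes Tx itself, so the finalized transaction is re-executed, not reverted. -/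
/-- If `Tx` has an effect certificate (a set `Ex` of `≥ 2f+1` validators executed it, so
its honest members hold `Tx`'s certificate in their `LockDb`), then any unlock quorum
`U` of `≥ 2f+1` unlock votes contains an honest validator holding the certificate.
Since honest votes carry the certificate they hold, the unlock certificate's `Cert`
field is that certificate, and per Algorithm 2 processing the unlock certificate
re-executes `Tx` itself rather than reverting it. -/
theorem unlock_reexecutes_finalized_tx {α Cert : Type*} [DecidableEq α]
    (f : ℕ) (V B Ex U : Finset α)
    (holds : α → Prop) (cert : Cert) (ucCert : Option Cert)
    (executesTx : Prop)
    (hV : V.card = 3 * f + 1)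
    (hB : B ⊆ V) (hBf : B.card ≤ f)
    (hEx : Ex ⊆ V) (hExc : 2 * f + 1 ≤ Ex.card)
    (hU : U ⊆ V) (hUc : 2 * f + 1 ≤ U.card)
    -- honest validators who executed Tx hold its certificate in their LockDb
    (hHold : ∀ v ∈ Ex, v ∉ B → holds v)
    -- an honest vote in U carries the certificate iff the validator holds it,
    -- so if some honest voter holds it then UC.Cert = some cert
    (hCarry : (∃ v ∈ U, v ∉ B ∧ holds v) → ucCert = some cert)
    -- Algorithm 2: a nonempty UC.Cert is executed
    (hProc : ucCert = some cert → executesTx) :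
    (∃ v ∈ U, v ∉ B ∧ holds v) ∧ ucCert = some cert ∧ executesTx := by
  have hinter : f + 1 ≤ (Ex ∩ U).card := by
    have h1 : (Ex ∪ U).card ≤ 3 * f + 1 := hV ▸ Finset.card_le_card (Finset.union_subset hEx hU)
    have h2 := Finset.card_union_add_card_inter Ex U
    omega
  have hne : ¬ (Ex ∩ U ⊆ B) := fun h => by
    have := Finset.card_le_card h; omega
  obtain ⟨v, hv, hvB⟩ := Finset.not_subset.mp hne
  have hvEx := Finset.mem_inter.mp hv
  have hx : ∃ v ∈ U, v ∉ B ∧ holds v := ⟨v, hvEx.2, hvB, hHold v hvEx.1 hvB⟩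
  exact ⟨hx, hCarry hx, hProc (hCarry hx)⟩
end

section
/- In the timed Auto-Unlock scheme, if honest validators only accept an unauthenticated unlock request for object key k when at least Δ time has elapsed since k was locked, and a certificate for a transaction on k (absent contention) can always be formed within time less than Δ of locking, then no unauthenticated unlock can abort an uncontended transaction: by the time any honest validator accepts the unlock request, the transaction certificate already exists and will be carried in the unlock votes. -/
/-- Timed Auto-Unlock: object `k` is locked at time `t₀`; absent contention its
transaction certificate is disseminated to all honest validators by time `t₀ + δ` with
`δ < Δ`; honest validators accept an unauthenticated unlock request only at times
`≥ t₀ + Δ`. Then any unlock quorum `U` (`≥ 2f+1` of `3f+1`, `≤ f` Byzantine) contains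
an honest validator holding the certificate at the acceptance time, so the resulting
unlock certificate carries the transaction certificate (`UC.Cert ≠ None`): no
unauthenticated unlock can abort an uncontended transaction. -/
theorem auto_unlock_no_abort {α C : Type*} [DecidableEq α]
    (f : ℕ) (V B U : Finset α)
    (t₀ δ Δ tacc : ℝ) (holds : α → ℝ → Prop)
    (cert : C) (ucCert : Option C)
    (hV : V.card = 3 * f + 1)
    (hB : B ⊆ V) (hBf : B.card ≤ f)
    (hU : U ⊆ V) (hUc : 2 * f + 1 ≤ U.card)
    (hδΔ : δ < Δ)
    -- certificate dissemination: every honest validator holds it from time t₀ + δ on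
    (hDissem : ∀ v ∈ V \ B, ∀ t, t₀ + δ ≤ t → holds v t)
    -- honest validators accept the unauthenticated unlock only after Δ has elapsed
    (hAcc : t₀ + Δ ≤ tacc)
    -- an honest voter holding the certificate at acceptance time includes it in its vote
    (hCarry : (∃ v ∈ U, v ∉ B ∧ holds v tacc) → ucCert = some cert) :
    (∃ v ∈ U, v ∉ B ∧ holds v tacc) ∧ ucCert ≠ none := by
  have hUB : (U \ B).Nonempty := by
    rw [← Finset.card_pos]
    have := Finset.le_card_sdiff B U
    omega
  obtain ⟨v, hv⟩ := hUB
  rw [Finset.mem_sdiff] at hv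
  have hvVB : v ∈ V \ B := Finset.mem_sdiff.mpr ⟨hU hv.1, hv.2⟩
  have hholds : holds v tacc := hDissem v hvVB tacc (by linarith)
  have hex : ∃ v ∈ U, v ∉ B ∧ holds v tacc := ⟨v, hv.1, hv.2, hholds⟩
  exact ⟨hex, by simp [hCarry hex]⟩
end
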